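/- For p ∈ [0,1], let 𝒵 = {|0⟩⟨0|, |1⟩⟨1|} and 𝒲^p = {|0⟩⟨0| + p|1⟩⟨1|, (1−p)|1⟩⟨1|}, with measure-and-prepare Choi operators C^M_𝒵 = |0⟩⟨0|⊗|1⟩⟨1| + |1⟩⟨1|⊗|2⟩⟨2| and C^M_{𝒲^p} = (|0⟩⟨0| + p|1⟩⟨1|)⊗|1⟩⟨1| + (1−p)|1⟩⟨1|⊗|2⟩⟨2| on ℂ²⊗ℂ². Then the supremum, over two-outcome testers (T₁, T₂) on ℂ²⊗ℂ², of (1/2)Tr(C^M_𝒵 T₁) + (1/2)Tr(C^M_{𝒲^p} T₂) equals 1/2 + p/2, and this value is attained by some tester. -/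

import Mathlib

open Matrix Kronecker
open scoped ComplexOrder Classical

noncomputable section

/-- Projection onto the `a`-th computational basis vector. -/
def outm {n : ℕ} (a : Fin n) : Matrix (Fin n) (Fin n) ℂ :=
  Matrix.single a a 1

/-- The unnormalized maximally entangled vector `|φ⁺_d⟩ = Σ_j e_j ⊗ e_j` in `ℂ^d ⊗ ℂ^d`. -/
def phiPlus (d : ℕ) : Fin d × Fin d → ℂ :=
  fun jj => if jj.1 = jj.2 then 1 else 0

/-- The positive semidefinite square root of a positive semidefinite matrix
(junk value `0` on non-PSD matrices). -/
def psqrt {d : Type} [Fintype d] [DecidableEq d] (M : Matrix d d ℂ) : Matrix d d ℂ :=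
  if h : M.PosSemidef then
    (h.1.eigenvectorUnitary : Matrix d d ℂ) *
      Matrix.diagonal ((↑) ∘ (√·) ∘ h.1.eigenvalues) *
      (star h.1.eigenvectorUnitary : Matrix d d ℂ)
  else 0

/-- A two-outcome tester on `ℂ^{dIn} ⊗ ℂ^{dOut}`. -/
def IsTester {dIn dOut : Type} [Fintype dIn] [Fintype dOut] [DecidableEq dIn] [DecidableEq dOut]
    (T₁ T₂ : Matrix (dIn × dOut) (dIn × dOut) ℂ) : Prop :=
  T₁.PosSemidef ∧ T₂.PosSemidef ∧
    ∃ σ : Matrix dIn dIn ℂ, σ.PosSemidef ∧ σ.trace = 1 ∧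
      T₁ + T₂ = σ ⊗ₖ (1 : Matrix dOut dOut ℂ)

/-- Choi operator of the measure-and-prepare channel of the two-outcome qubit POVM `M`. -/
def mpChoi (M : Fin 2 → Matrix (Fin 2) (Fin 2) ℂ) :
    Matrix (Fin 2 × Fin 2) (Fin 2 × Fin 2) ℂ :=
  ∑ a, (M a)ᵀ ⊗ₖ outm a

/-- Choi operator of the Lüders instrument of the two-outcome qubit POVM `M`. -/
def ludersChoi (M : Fin 2 → Matrix (Fin 2) (Fin 2) ℂ) :
    Matrix (Fin 2 × Fin 2 × Fin 2) (Fin 2 × Fin 2 × Fin 2) ℂ :=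
  ∑ a, Matrix.reindex (Equiv.prodAssoc (Fin 2) (Fin 2) (Fin 2))
      (Equiv.prodAssoc (Fin 2) (Fin 2) (Fin 2))
    ((((1 : Matrix (Fin 2) (Fin 2) ℂ) ⊗ₖ psqrt (M a)) *
        Matrix.vecMulVec (phiPlus 2) (star (phiPlus 2)) *
        ((1 : Matrix (Fin 2) (Fin 2) ℂ) ⊗ₖ psqrt (M a))) ⊗ₖ outm a)

/-- The qubit POVM `𝒵 = {|0⟩⟨0|, |1⟩⟨1|}`. -/
def Zpovm : Fin 2 → Matrix (Fin 2) (Fin 2) ℂ :=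
  ![outm 0, outm 1]

/-- The qubit POVM `𝒲^p = {|0⟩⟨0| + p|1⟩⟨1|, (1-p)|1⟩⟨1|}`. -/
def Wpovm (p : ℝ) : Fin 2 → Matrix (Fin 2) (Fin 2) ℂ :=
  ![outm 0 + (p : ℂ) • outm 1, (1 - (p : ℂ)) • outm 1]

/-- The optimal equal-prior success probability of discriminating `𝒵` and `𝒲^p`
without access to the post-measurement state. -/
def SM (p : ℝ) : ℝ :=
  sSup {r : ℝ | ∃ T₁ T₂ : Matrix (Fin 2 × Fin 2) (Fin 2 × Fin 2) ℂ,
    IsTester T₁ T₂ ∧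
    r = (1 / 2) * ((mpChoi Zpovm * T₁).trace).re +
        (1 / 2) * ((mpChoi (Wpovm p) * T₂).trace).re}

/-- The optimal equal-prior success probability of discriminating the Lüders instruments
of `𝒵` and `𝒲^p`. -/
def SL (p : ℝ) : ℝ :=
  sSup {r : ℝ | ∃ T₁ T₂ : Matrix (Fin 2 × Fin 2 × Fin 2) (Fin 2 × Fin 2 × Fin 2) ℂ,
    IsTester T₁ T₂ ∧
    r = (1 / 2) * ((ludersChoi Zpovm * T₁).trace).re +
        (1 / 2) * ((ludersChoi (Wpovm p) * T₂).trace).re}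


lemma outm_psd {n : ℕ} (a : Fin n) : (outm a).PosSemidef := by
  refine Matrix.PosSemidef.of_dotProduct_mulVec_nonneg ?_ ?_
  · ext i j
    simp only [outm, Matrix.single, Matrix.conjTranspose_apply, Matrix.of_apply]
    by_cases h1 : a = i <;> by_cases h2 : a = j <;> simp [h1, h2]
  · intro x
    have : star x ⬝ᵥ (outm a *ᵥ x) = star (x a) * x a := by
      simp [outm, dotProduct, Matrix.mulVec, Matrix.single, ite_and,
        Finset.mul_sum]
    rw [this]
    exact star_mul_self_nonneg _

lemma outm_kron_psd {n : ℕ} (a b : Fin n) : (outm a ⊗ₖ outm b).PosSemidef := by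
  refine Matrix.PosSemidef.of_dotProduct_mulVec_nonneg ?_ ?_
  · ext ⟨i,j⟩ ⟨k,l⟩
    simp only [outm, Matrix.single, Matrix.conjTranspose_apply, Matrix.of_apply,
      Matrix.kroneckerMap_apply]
    by_cases h1 : a = i <;> by_cases h2 : a = k <;> by_cases h3 : b = j <;>
      by_cases h4 : b = l <;> simp [h1, h2, h3, h4, apply_ite (starRingEnd ℂ)]
  · intro x
    have : star x ⬝ᵥ ((outm a ⊗ₖ outm b) *ᵥ x) = star (x (a,b)) * x (a,b) := by
      simp [outm, dotProduct, Matrix.mulVec, Matrix.single, Fintype.sum_prod_type,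
        Finset.mul_sum, ite_and]
    rw [this]
    exact star_mul_self_nonneg _

lemma psd_diag_re_nonneg {m : Type*} [Fintype m] [DecidableEq m] {M : Matrix m m ℂ}
    (h : M.PosSemidef) (i : m) : 0 ≤ (M i i).re ∧ (M i i).im = 0 := by
  have := h.dotProduct_mulVec_nonneg (Pi.single i 1)
  have h2 : star (Pi.single i 1) ⬝ᵥ (M *ᵥ Pi.single i 1) = M i i := by
    simp [dotProduct, Matrix.mulVec, Pi.single_apply, apply_ite (starRingEnd ℂ)]
  rw [h2, Complex.le_def] at this
  exact ⟨by simpa using this.1, (this.2).symm⟩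

lemma traceZ (T : Matrix (Fin 2 × Fin 2) (Fin 2 × Fin 2) ℂ) :
    (mpChoi Zpovm * T).trace = T (0,0) (0,0) + T (1,1) (1,1) := by
  simp [mpChoi, Zpovm, Matrix.trace, Matrix.mul_apply, Fintype.sum_prod_type,
    Fin.sum_univ_two, outm, Matrix.single, Matrix.diag]

lemma traceW (p : ℝ) (T : Matrix (Fin 2 × Fin 2) (Fin 2 × Fin 2) ℂ) :
    (mpChoi (Wpovm p) * T).trace
      = T (0,0) (0,0) + (p : ℂ) * T (1,0) (1,0) + (1 - (p : ℂ)) * T (1,1) (1,1) := by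
  simp [mpChoi, Wpovm, Matrix.trace, Matrix.mul_apply, Fintype.sum_prod_type,
    Fin.sum_univ_two, outm, Matrix.single, Matrix.diag]
  ring

theorem stmt8 (p : ℝ) (hp0 : 0 ≤ p) (hp1 : p ≤ 1) :
    IsGreatest {r : ℝ | ∃ T₁ T₂ : Matrix (Fin 2 × Fin 2) (Fin 2 × Fin 2) ℂ,
        IsTester T₁ T₂ ∧
        r = (1 / 2) * ((mpChoi Zpovm * T₁).trace).re +
            (1 / 2) * ((mpChoi (Wpovm p) * T₂).trace).re}
      (1 / 2 + p / 2) := by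
  constructor
  · -- membership: tester T₁ = |1⟩⟨1|⊗|1⟩⟨1|, T₂ = |1⟩⟨1|⊗|0⟩⟨0|
    refine ⟨outm 1 ⊗ₖ outm 1, outm 1 ⊗ₖ outm 0, ⟨outm_kron_psd 1 1, outm_kron_psd 1 0,
      outm 1, outm_psd 1, ?_, ?_⟩, ?_⟩
    · simp [outm, Matrix.trace, Matrix.diag, Fin.sum_univ_two, Matrix.single]
    · have h1 : (1 : Matrix (Fin 2) (Fin 2) ℂ) = outm 0 + outm 1 := by
        ext i j
        fin_cases i <;> fin_cases j <;>
          simp [outm, Matrix.single, Matrix.one_apply]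
      rw [h1, Matrix.kronecker_add]
      abel
    · rw [traceZ, traceW p]
      simp [outm, Matrix.kroneckerMap_apply, Matrix.single]
      ring
  · -- upper bound
    rintro r ⟨T₁, T₂, ⟨hT₁, hT₂, σ, hσ, hσtr, hsum⟩, hr⟩
    have key : ∀ (i j : Fin 2), T₁ (i,j) (i,j) + T₂ (i,j) (i,j) = σ i i := by
      intro i j
      have := congrArg (fun M => M (i,j) (i,j)) hsum
      simpa [Matrix.kroneckerMap_apply, Matrix.one_apply] using this
    have hσ00 := psd_diag_re_nonneg hσ 0
    have hσ11 := psd_diag_re_nonneg hσ 1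
    have ha := psd_diag_re_nonneg hT₁ (0,0)
    have hb := psd_diag_re_nonneg hT₁ (1,1)
    have he1 := psd_diag_re_nonneg hT₁ (1,0)
    have hc := psd_diag_re_nonneg hT₂ (0,0)
    have hf := psd_diag_re_nonneg hT₂ (1,1)
    have he2 := psd_diag_re_nonneg hT₂ (1,0)
    have k00 := congrArg Complex.re (key 0 0)
    have k11 := congrArg Complex.re (key 1 1)
    have k10 := congrArg Complex.re (key 1 0)
    simp only [Complex.add_re] at k00 k11 k10
    have ktr : (σ 0 0).re + (σ 1 1).re = 1 := by
      have := congrArg Complex.re hσtr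
      simpa [Matrix.trace, Matrix.diag, Fin.sum_univ_two] using this
    rw [traceZ, traceW p] at hr
    rw [hr]
    simp only [Complex.add_re, Complex.mul_re, Complex.sub_re, Complex.one_re,
      Complex.ofReal_re, Complex.ofReal_im, Complex.sub_im, Complex.one_im,
      ha.2, hb.2, hc.2, hf.2, he2.2]
    nlinarith [mul_nonneg hp0 hf.1, mul_nonneg hp0 he1.1, ha.1, hb.1, hc.1, hf.1,
      he1.1, he2.1, hσ00.1, hσ11.1, mul_nonneg hp0 hσ00.1]
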